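/- In the minimum spanning tree problem with uncertainty intervals I_e = [ℓ_e, h_e], for every non-bridge edge uv the threshold of inclusion equals the non-trivial bottleneck under the lower weights, T⁺_{uv} = b_ℓ(u,v), and the threshold of exclusion equals the non-trivial bottleneck under the upper weights, T⁻_{uv} = b_h(u,v). -/

import Mathlib

open scoped Classical in
/-- Total weight of the edges of a graph (used for spanning trees). -/
noncomputable def twt {V : Type*} [Fintype V] [DecidableEq V]
    (w : Sym2 V → ℝ) (T : SimpleGraph V) : ℝ :=
  ∑ e ∈ Finset.univ.filter (fun e => e ∈ T.edgeSet), w e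

/-- `T` is a spanning tree of `G`: a subgraph (on the same vertex set) which is a tree. -/
def IsSpanningTree {V : Type*} (G T : SimpleGraph V) : Prop :=
  T ≤ G ∧ T.IsTree

/-- `T` is a minimum spanning tree of `G` for the weights `w`. -/
def IsMST {V : Type*} [Fintype V] [DecidableEq V]
    (G : SimpleGraph V) (w : Sym2 V → ℝ) (T : SimpleGraph V) : Prop :=
  IsSpanningTree G T ∧ ∀ T', IsSpanningTree G T' → twt w T ≤ twt w T'

open scoped Classical in
/-- `OPT^{-e}`: minimum weight of a spanning tree avoiding the edge `e`. -/
noncomputable def OPTmTree {V : Type*} [Fintype V] [DecidableEq V]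
    (G : SimpleGraph V) (w : Sym2 V → ℝ) (e : Sym2 V) : ℝ :=
  sInf {t : ℝ | ∃ T, IsSpanningTree G T ∧ e ∉ T.edgeSet ∧ t = twt w T}

open scoped Classical in
/-- `OPT^{+e}`: minimum weight, with `w e` set to `0`, of a spanning tree containing `e`. -/
noncomputable def OPTpTree {V : Type*} [Fintype V] [DecidableEq V]
    (G : SimpleGraph V) (w : Sym2 V → ℝ) (e : Sym2 V) : ℝ :=
  sInf {t : ℝ | ∃ T, IsSpanningTree G T ∧ e ∈ T.edgeSet ∧
    t = ∑ f ∈ Finset.univ.filter (fun f => f ∈ T.edgeSet ∧ f ≠ e), w f}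

/-- The non-trivial bottleneck `b_w(u,v)`: the minimum over `u`–`v` paths with at least two
edges of the maximum edge weight on the path (equivalently the `u`–`v` bottleneck in
`G - uv`). -/
noncomputable def ntb {V : Type*} (G : SimpleGraph V) (w : Sym2 V → ℝ) (u v : V) : ℝ :=
  sInf {t : ℝ | ∃ q : G.Walk u v, q.IsPath ∧ 2 ≤ q.length ∧
    t = sSup (w '' {f | f ∈ q.edges})}

/-- The MST threshold of inclusion of the edge `e`: the infimum over realizations of the
uncertainty intervals of the threshold `T_e(w) = OPT^{-e}(w) - OPT^{+e}(w)`. -/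
noncomputable def TplusTree {V : Type*} [Fintype V] [DecidableEq V]
    (G : SimpleGraph V) (lo hi : Sym2 V → ℝ) (e : Sym2 V) : ℝ :=
  sInf {t : ℝ | ∃ w : Sym2 V → ℝ, (∀ f, w f ∈ Set.Icc (lo f) (hi f)) ∧
    t = OPTmTree G w e - OPTpTree G w e}

/-- The MST threshold of exclusion of the edge `e`: the supremum over realizations. -/
noncomputable def TminusTree {V : Type*} [Fintype V] [DecidableEq V]
    (G : SimpleGraph V) (lo hi : Sym2 V → ℝ) (e : Sym2 V) : ℝ :=
  sSup {t : ℝ | ∃ w : Sym2 V → ℝ, (∀ f, w f ∈ Set.Icc (lo f) (hi f)) ∧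
    t = OPTmTree G w e - OPTpTree G w e}


open SimpleGraph

section Aux
variable {V : Type*}

lemma walk_reach_del {K : SimpleGraph V} {a b : V} :
    ∀ {x y : V}, K.Walk x y →
      (K.deleteEdges {s(a,b)}).Reachable x y ∨ (K.deleteEdges {s(a,b)}).Reachable x a ∨
        (K.deleteEdges {s(a,b)}).Reachable x b := by
  intro x y p
  induction p with
  | nil => exact Or.inl (Reachable.refl _)
  | @cons x c y h p ih =>
    by_cases he : s(x, c) = s(a, b)
    · rw [Sym2.eq_iff] at he
      rcases he with ⟨rfl, rfl⟩ | ⟨rfl, rfl⟩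
      · exact Or.inr (Or.inl (Reachable.refl _))
      · exact Or.inr (Or.inr (Reachable.refl _))
    · have hadj : (K.deleteEdges {s(a,b)}).Adj x c := by
        rw [SimpleGraph.deleteEdges_adj]
        exact ⟨h, by simpa using he⟩
      rcases ih with h1 | h1 | h1
      · exact Or.inl (hadj.reachable.trans h1)
      · exact Or.inr (Or.inl (hadj.reachable.trans h1))
      · exact Or.inr (Or.inr (hadj.reachable.trans h1))

/-- In a connected graph minus one edge, every vertex reaches an endpoint of the edge. -/
lemma reach_endpoint {K : SimpleGraph V} {a b : V} (hK : K.Connected) (x : V) :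
    (K.deleteEdges {s(a,b)}).Reachable x a ∨ (K.deleteEdges {s(a,b)}).Reachable x b := by
  obtain ⟨p⟩ := hK x a
  rcases walk_reach_del p with h | h | h
  · exact Or.inl h
  · exact Or.inl h
  · exact Or.inr h

lemma exists_crossing_edge {G K : SimpleGraph V} {u : V} :
    ∀ {x v : V} (q : G.Walk x v), ¬ K.Reachable u v → K.Reachable u x →
      ∃ a b : V, s(a,b) ∈ q.edges ∧ G.Adj a b ∧ K.Reachable u a ∧ ¬ K.Reachable u b := by
  intro x v q
  induction q with
  | nil => exact fun hv h => absurd h hv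
  | @cons x c v' h p ih =>
    intro hv hx
    by_cases hc : K.Reachable u c
    · obtain ⟨a, b, hab, h1, h2, h3⟩ := ih hv hc
      exact ⟨a, b, List.mem_cons_of_mem _ hab, h1, h2, h3⟩
    · exact ⟨x, c, List.mem_cons_self, h, hx, hc⟩

lemma isAcyclic_mono {H G : SimpleGraph V} (hle : H ≤ G) (hG : G.IsAcyclic) : H.IsAcyclic := by
  intro x c hc
  have hsub : ∀ f ∈ c.edges, f ∈ G.edgeSet := fun f hf =>
    (SimpleGraph.edgeSet_mono hle) (c.edges_subset_edgeSet hf)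
  exact hG (c.transfer G hsub) (hc.transfer hsub)

lemma acyclic_add_edge {K : SimpleGraph V} {a b : V} (hab : a ≠ b)
    (hK : K.IsAcyclic) (hr : ¬ K.Reachable a b) :
    (K ⊔ SimpleGraph.fromEdgeSet {s(a,b)}).IsAcyclic := by
  intro x c hc
  by_cases he : s(a,b) ∈ c.edges
  · have hreach := (adj_and_reachable_delete_edges_iff_exists_cycle.2 ⟨x, c, hc, he⟩).2
    apply hr
    refine hreach.mono ?_
    intro p q hpq
    rcases hpq with ⟨h1 | h1, h2⟩
    · exact h1
    · exact absurd h1 h2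
  · apply hK (c.transfer K ?_) (hc.transfer _)
    intro f hf
    have := c.edges_subset_edgeSet hf
    rw [SimpleGraph.edgeSet_sup, SimpleGraph.edgeSet_fromEdgeSet] at this
    rcases this with h1 | ⟨h1, _⟩
    · exact h1
    · exact absurd (h1 ▸ hf) he

lemma connected_add_edge {K : SimpleGraph V} {a b : V} (hab : a ≠ b)
    (hall : ∀ x, K.Reachable x a ∨ K.Reachable x b) :
    (K ⊔ SimpleGraph.fromEdgeSet {s(a,b)}).Connected := by
  have hadj : (K ⊔ SimpleGraph.fromEdgeSet {s(a,b)}).Adj a b := by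
    rw [SimpleGraph.sup_adj, SimpleGraph.fromEdgeSet_adj]
    exact Or.inr ⟨rfl, hab⟩
  rw [SimpleGraph.connected_iff]
  refine ⟨fun x y => ?_, ⟨a⟩⟩
  have hmono : K ≤ K ⊔ SimpleGraph.fromEdgeSet {s(a,b)} := le_sup_left
  have hx' : (K ⊔ SimpleGraph.fromEdgeSet {s(a,b)}).Reachable x a := by
    rcases hall x with h | h
    · exact h.mono hmono
    · exact (h.mono hmono).trans hadj.symm.reachable
  have hy' : (K ⊔ SimpleGraph.fromEdgeSet {s(a,b)}).Reachable y a := by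
    rcases hall y with h | h
    · exact h.mono hmono
    · exact (h.mono hmono).trans hadj.symm.reachable
  exact hx'.trans hy'.symm

lemma connected_del_of_reach {K : SimpleGraph V} {a b : V} (hK : K.Connected)
    (hr : (K.deleteEdges {s(a,b)}).Reachable a b) : (K.deleteEdges {s(a,b)}).Connected := by
  rw [SimpleGraph.connected_iff]
  refine ⟨fun x y => ?_, hK.nonempty⟩
  have hx' : (K.deleteEdges {s(a,b)}).Reachable x a := by
    rcases reach_endpoint (a := a) (b := b) hK x with h | h
    · exact h
    · exact h.trans hr.symm
  have hy' : (K.deleteEdges {s(a,b)}).Reachable y a := by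
    rcases reach_endpoint (a := a) (b := b) hK y with h | h
    · exact h
    · exact h.trans hr.symm
  exact hx'.trans hy'.symm

lemma two_le_length {H : SimpleGraph V} {u v : V} (hne : u ≠ v) (hnadj : ¬ H.Adj u v)
    (p : H.Walk u v) : 2 ≤ p.length := by
  cases p with
  | nil => exact absurd rfl hne
  | cons h p' =>
    cases p' with
    | nil => exact absurd h hnadj
    | cons h' p'' => simp only [Walk.length_cons]; omega

lemma path_no_uv {G : SimpleGraph V} {u v : V} (hne : u ≠ v) :
    ∀ {q : G.Walk u v}, q.IsPath → 2 ≤ q.length → s(u,v) ∉ q.edges := by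
  intro q hq h2 hmem
  cases q with
  | nil => simp at hmem
  | cons h p =>
    rename_i c
    rw [Walk.edges_cons, List.mem_cons] at hmem
    rcases hmem with hmem | hmem
    · have hcv : c = v := by
        rw [Sym2.eq_iff] at hmem
        rcases hmem with ⟨-, h2⟩ | ⟨h1, h2⟩
        · exact h2.symm
        · exact absurd h2.symm hne
      subst hcv
      have hp : p = Walk.nil := Walk.isPath_iff_eq_nil.1 ((Walk.cons_isPath_iff _ _).1 hq).1
      rw [Walk.length_cons, hp] at h2
      simp at h2
    · have hu : u ∈ p.support := Walk.fst_mem_support_of_mem_edges p hmem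
      exact ((Walk.cons_isPath_iff _ _).1 hq).2 hu

end Aux

section Aux2
variable {V : Type*}

lemma exists_st_aux [Fintype V] [DecidableEq V] :
    ∀ (n : ℕ) (G : SimpleGraph V), G.edgeSet.ncard ≤ n → G.Connected →
      ∃ T, T ≤ G ∧ T.IsTree := by
  intro n
  induction n with
  | zero =>
    intro G hcard hG
    refine ⟨G, le_refl _, hG, ?_⟩
    intro x c hc
    have h3 := hc.three_le_length
    have hne : c.edges ≠ [] := by
      intro h
      have := c.length_edges
      rw [h] at this
      simp at this
      omega
    obtain ⟨f, hf⟩ := List.exists_mem_of_ne_nil _ hne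
    have hfG : f ∈ G.edgeSet := c.edges_subset_edgeSet hf
    have hempty : G.edgeSet = ∅ :=
      (Set.ncard_eq_zero (G.edgeSet.toFinite)).1 (le_antisymm hcard (Nat.zero_le _))
    rw [hempty] at hfG
    exact hfG
  | succ n ih =>
    intro G hcard hG
    by_cases ha : G.IsAcyclic
    · exact ⟨G, le_refl _, hG, ha⟩
    · simp only [IsAcyclic, not_forall, not_not] at ha
      obtain ⟨x, c, hc⟩ := ha
      have h3 := hc.three_le_length
      have hne : c.edges ≠ [] := by
        intro h
        have := c.length_edges
        rw [h] at this
        simp at this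
        omega
      obtain ⟨f, hf⟩ := List.exists_mem_of_ne_nil _ hne
      induction f using Sym2.ind with
      | _ a b =>
      have hadj : G.Adj a b := c.adj_of_mem_edges hf
      have hreach : (G \ SimpleGraph.fromEdgeSet {s(a,b)}).Reachable a b :=
        (adj_and_reachable_delete_edges_iff_exists_cycle.2 ⟨x, c, hc, hf⟩).2
      have hreach' : (G.deleteEdges {s(a,b)}).Reachable a b := hreach
      have hconn := connected_del_of_reach hG hreach'
      have hcard' : (G.deleteEdges {s(a,b)}).edgeSet.ncard ≤ n := by
        rw [SimpleGraph.edgeSet_deleteEdges]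
        have hlt : (G.edgeSet \ {s(a,b)}).ncard < G.edgeSet.ncard :=
          Set.ncard_lt_ncard (Set.sdiff_singleton_ssubset.2 hadj) (G.edgeSet.toFinite)
        omega
      obtain ⟨T, h1, h2⟩ := ih (G.deleteEdges {s(a,b)}) hcard' hconn
      exact ⟨T, h1.trans (SimpleGraph.deleteEdges_le _), h2⟩

lemma exists_st [Fintype V] [DecidableEq V] {G : SimpleGraph V} (hG : G.Connected) :
    ∃ T, T ≤ G ∧ T.IsTree :=
  exists_st_aux G.edgeSet.ncard G le_rfl hG

lemma swap_tree {T : SimpleGraph V} {a b u v : V}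
    (hT : T.IsTree) (huv : u ≠ v)
    (h1 : ¬ (T.deleteEdges {s(a,b)}).Reachable u v)
    (h2 : ∀ x, (T.deleteEdges {s(a,b)}).Reachable x u ∨ (T.deleteEdges {s(a,b)}).Reachable x v) :
    (T.deleteEdges {s(a,b)} ⊔ SimpleGraph.fromEdgeSet {s(u,v)}).IsTree ∧
    (T.deleteEdges {s(a,b)} ⊔ SimpleGraph.fromEdgeSet {s(u,v)}).edgeSet =
      (T.edgeSet \ {s(a,b)}) ∪ {s(u,v)} := by
  constructor
  · exact ⟨connected_add_edge huv h2,
      acyclic_add_edge huv (isAcyclic_mono (SimpleGraph.deleteEdges_le _) hT.2) h1⟩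
  · rw [SimpleGraph.edgeSet_sup, SimpleGraph.edgeSet_fromEdgeSet, SimpleGraph.edgeSet_deleteEdges]
    congr 1
    ext g
    simp only [Set.mem_diff, Set.mem_singleton_iff, Set.mem_setOf_eq, and_iff_left_iff_imp]
    rintro rfl
    simp [Sym2.mk_isDiag_iff, huv]

end Aux2
section W

variable {V : Type*} [Fintype V] [DecidableEq V]

open scoped Classical in
lemma twt_swap (w : Sym2 V → ℝ) {T T₂ : SimpleGraph V}
    {f e : Sym2 V} (hfT : f ∈ T.edgeSet) (heT : e ∉ T.edgeSet)
    (hE : T₂.edgeSet = (T.edgeSet \ {f}) ∪ {e}) :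
    twt w T₂ = twt w T - w f + w e := by
  unfold twt
  have hef : e ≠ f := fun h => heT (h ▸ hfT)
  have hset : (Finset.univ.filter (fun g => g ∈ T₂.edgeSet)) =
      insert e ((Finset.univ.filter (fun g => g ∈ T.edgeSet)).erase f) := by
    ext g
    simp only [Finset.mem_filter, Finset.mem_univ, true_and, hE, Set.mem_union,
      Set.mem_diff, Set.mem_singleton_iff, Finset.mem_insert, Finset.mem_erase]
    tauto
  have h1 : e ∉ (Finset.univ.filter (fun g => g ∈ T.edgeSet)).erase f := by
    simp [heT]
  have h2 : f ∈ Finset.univ.filter (fun g => g ∈ T.edgeSet) := by simp [hfT]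
  rw [hset, Finset.sum_insert h1, Finset.sum_erase_eq_sub h2]
  ring

open scoped Classical in
lemma sum_ne_eq (w : Sym2 V → ℝ) {T : SimpleGraph V} {e : Sym2 V} (he : e ∈ T.edgeSet) :
    ∑ f ∈ Finset.univ.filter (fun f => f ∈ T.edgeSet ∧ f ≠ e), w f = twt w T - w e := by
  unfold twt
  have hset : Finset.univ.filter (fun f => f ∈ T.edgeSet ∧ f ≠ e) =
      (Finset.univ.filter (fun f => f ∈ T.edgeSet)).erase e := by
    ext g
    simp only [Finset.mem_filter, Finset.mem_univ, true_and, Finset.mem_erase]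
    tauto
  rw [hset, Finset.sum_erase_eq_sub (by simp [he])]

end W
section Exch
variable {V : Type*} [Fintype V] [DecidableEq V] {G : SimpleGraph V} {u v : V}

lemma sup_from_le {K : SimpleGraph V} {a b : V} (hK : K ≤ G) (hG : G.Adj a b) :
    K ⊔ SimpleGraph.fromEdgeSet {s(a,b)} ≤ G := by
  apply sup_le hK
  intro x y hxy
  rw [SimpleGraph.fromEdgeSet_adj, Set.mem_singleton_iff] at hxy
  have : s(x,y) ∈ G.edgeSet := by rw [hxy.1]; exact hG
  exact this

lemma exchange_add (w : Sym2 V → ℝ) {T' : SimpleGraph V} (hT'G : T' ≤ G) (hT' : T'.IsTree)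
    (huv : G.Adj u v) (heT' : s(u,v) ∉ T'.edgeSet)
    {P : T'.Walk u v} (hP : P.IsPath) {f : Sym2 V} (hf : f ∈ P.edges) :
    ∃ T₂, IsSpanningTree G T₂ ∧ s(u,v) ∈ T₂.edgeSet ∧
      twt w T₂ = twt w T' - w f + w (s(u,v)) := by
  induction f using Sym2.ind with
  | _ a b =>
  have hfT' : s(a,b) ∈ T'.edgeSet := P.edges_subset_edgeSet hf
  have h1 : ¬ (T'.deleteEdges {s(a,b)}).Reachable u v := by
    rintro ⟨p0⟩
    have hpw : (p0.toPath : (T'.deleteEdges {s(a,b)}).Walk u v).IsPath := p0.toPath.2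
    have hedge : ∀ g ∈ (p0.toPath : (T'.deleteEdges {s(a,b)}).Walk u v).edges,
        g ∈ T'.edgeSet := fun g hg =>
      (SimpleGraph.edgeSet_mono (SimpleGraph.deleteEdges_le _)) (Walk.edges_subset_edgeSet _ hg)
    have hfnot : s(a,b) ∉ (p0.toPath : (T'.deleteEdges {s(a,b)}).Walk u v).edges := by
      intro hmem
      have := Walk.edges_subset_edgeSet _ hmem
      rw [SimpleGraph.edgeSet_deleteEdges] at this
      exact this.2 rfl
    have htr := (hpw.transfer hedge)
    obtain ⟨q0, _, hq0u⟩ := hT'.existsUnique_path u v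
    have e3 : ((p0.toPath : (T'.deleteEdges {s(a,b)}).Walk u v).transfer T' hedge) = P :=
      (hq0u _ htr).trans (hq0u _ hP).symm
    rw [← e3, Walk.edges_transfer] at hf
    exact hfnot hf
  have h2 : ∀ x, (T'.deleteEdges {s(a,b)}).Reachable x u ∨
      (T'.deleteEdges {s(a,b)}).Reachable x v := by
    rcases reach_endpoint (a := a) (b := b) hT'.1 u with hu1 | hu1 <;>
      rcases reach_endpoint (a := a) (b := b) hT'.1 v with hv1 | hv1
    · exact absurd (hu1.trans hv1.symm) h1
    · intro x
      rcases reach_endpoint (a := a) (b := b) hT'.1 x with h | h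
      · exact Or.inl (h.trans hu1.symm)
      · exact Or.inr (h.trans hv1.symm)
    · intro x
      rcases reach_endpoint (a := a) (b := b) hT'.1 x with h | h
      · exact Or.inr (h.trans hv1.symm)
      · exact Or.inl (h.trans hu1.symm)
    · exact absurd (hu1.trans hv1.symm) h1
  obtain ⟨htree, hedgeset⟩ := swap_tree hT' huv.ne h1 h2
  refine ⟨_, ⟨sup_from_le ((SimpleGraph.deleteEdges_le _).trans hT'G) huv, htree⟩, ?_, ?_⟩
  · rw [hedgeset]
    exact Set.mem_union_right _ rfl
  · exact twt_swap w hfT' heT' hedgeset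

lemma exchange_remove (w : Sym2 V → ℝ) {T : SimpleGraph V} (hTG : T ≤ G) (hT : T.IsTree)
    (huv : G.Adj u v) (heT : s(u,v) ∈ T.edgeSet)
    {q : G.Walk u v} (hq : s(u,v) ∉ q.edges) :
    ∃ T₂ f, f ∈ q.edges ∧ IsSpanningTree G T₂ ∧ s(u,v) ∉ T₂.edgeSet ∧
      twt w T₂ = twt w T - w (s(u,v)) + w f := by
  have hbr : ¬ (T.deleteEdges {s(u,v)}).Reachable u v := by
    have hbridge : T.IsBridge s(u,v) :=
      (SimpleGraph.isAcyclic_iff_forall_adj_isBridge.1 hT.2) heT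
    exact SimpleGraph.isBridge_iff.1 hbridge
  obtain ⟨a, b, hab, hGab, hra, hrb⟩ := exists_crossing_edge q hbr (Reachable.refl u)
  have hfe : s(a,b) ≠ s(u,v) := fun h => hq (h ▸ hab)
  have h1 : ¬ (T.deleteEdges {s(u,v)}).Reachable a b := fun h => hrb (hra.trans h)
  have hbv : (T.deleteEdges {s(u,v)}).Reachable b v := by
    rcases reach_endpoint (a := u) (b := v) hT.1 b with h | h
    · exact absurd h.symm hrb
    · exact h
  have h2 : ∀ x, (T.deleteEdges {s(u,v)}).Reachable x a ∨
      (T.deleteEdges {s(u,v)}).Reachable x b := by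
    intro x
    rcases reach_endpoint (a := u) (b := v) hT.1 x with h | h
    · exact Or.inl (h.trans hra)
    · exact Or.inr (h.trans hbv.symm)
  have habT : s(a,b) ∉ T.edgeSet := by
    intro hmem
    apply h1
    have : (T.deleteEdges {s(u,v)}).Adj a b := by
      rw [SimpleGraph.deleteEdges_adj]
      exact ⟨hmem, by simpa using hfe⟩
    exact this.reachable
  obtain ⟨htree, hedgeset⟩ := swap_tree (a := u) (b := v) (u := a) (v := b) hT hGab.ne h1 h2
  refine ⟨_, s(a,b), hab, ⟨sup_from_le ((SimpleGraph.deleteEdges_le _).trans hTG) hGab, htree⟩,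
    ?_, ?_⟩
  · rw [hedgeset]
    rintro (⟨-, h⟩ | h)
    · exact h rfl
    · exact hfe h.symm
  · exact twt_swap w heT habT hedgeset

end Exch

section Core
variable {V : Type*} [Fintype V] [DecidableEq V]

lemma exists_edge_of_two_le {H : SimpleGraph V} {x y : V} (q : H.Walk x y)
    (h2 : 2 ≤ q.length) : ∃ g, g ∈ q.edges := by
  apply List.exists_mem_of_ne_nil
  intro h
  have := q.length_edges
  rw [h] at this
  simp at this
  omega

lemma bddAbove_img (w : Sym2 V → ℝ) (l : List (Sym2 V)) : BddAbove (w '' {f | f ∈ l}) :=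
  ((l.finite_toSet).image w).bddAbove

lemma bddBelow_ntb_set (G : SimpleGraph V) (w : Sym2 V → ℝ) (u v : V) :
    BddBelow {t : ℝ | ∃ q : G.Walk u v, q.IsPath ∧ 2 ≤ q.length ∧
      t = sSup (w '' {f | f ∈ q.edges})} := by
  have : Nonempty (Sym2 V) := ⟨s(u,u)⟩
  refine ⟨Finset.univ.inf' Finset.univ_nonempty w, ?_⟩
  rintro c ⟨q, hqp, hql, rfl⟩
  obtain ⟨g, hg⟩ := exists_edge_of_two_le q hql
  exact le_trans (Finset.inf'_le w (Finset.mem_univ g))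
    (le_csSup (bddAbove_img w q.edges) ⟨g, hg, rfl⟩)

lemma ntb_mono (G : SimpleGraph V) (u v : V) {q0 : G.Walk u v} (h0p : q0.IsPath)
    (h0l : 2 ≤ q0.length) {w₁ w₂ : Sym2 V → ℝ} (h : ∀ f, w₁ f ≤ w₂ f) :
    ntb G w₁ u v ≤ ntb G w₂ u v := by
  unfold ntb
  refine le_csInf ⟨_, ⟨q0, h0p, h0l, rfl⟩⟩ ?_
  rintro c ⟨q, hqp, hql, rfl⟩
  have hne : (w₁ '' {f | f ∈ q.edges}).Nonempty := by
    obtain ⟨g, hg⟩ := exists_edge_of_two_le q hql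
    exact ⟨w₁ g, g, hg, rfl⟩
  have step2 : sSup (w₁ '' {f | f ∈ q.edges}) ≤ sSup (w₂ '' {f | f ∈ q.edges}) := by
    apply csSup_le hne
    rintro _ ⟨g, hg, rfl⟩
    exact (h g).trans (le_csSup (bddAbove_img w₂ q.edges) ⟨g, hg, rfl⟩)
  exact le_trans (csInf_le (bddBelow_ntb_set G w₁ u v) ⟨q, hqp, hql, rfl⟩) step2

open scoped Classical in
lemma core (G : SimpleGraph V) (hG : G.Connected) (w : Sym2 V → ℝ) (u v : V) (huv : G.Adj u v)
    (hb : ¬ G.IsBridge s(u,v)) :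
    OPTmTree G w s(u,v) = OPTpTree G w s(u,v) + ntb G w u v := by
  have hreach : (G.deleteEdges {s(u,v)}).Reachable u v := by
    rw [SimpleGraph.isBridge_iff] at hb
    push_neg at hb
    exact hb
  unfold OPTmTree OPTpTree ntb
  set A := {t : ℝ | ∃ T, IsSpanningTree G T ∧ s(u,v) ∉ T.edgeSet ∧ t = twt w T} with hA
  set B := {t : ℝ | ∃ T, IsSpanningTree G T ∧ s(u,v) ∈ T.edgeSet ∧
    t = ∑ f ∈ Finset.univ.filter (fun f => f ∈ T.edgeSet ∧ f ≠ s(u,v)), w f} with hB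
  set C := {t : ℝ | ∃ q : G.Walk u v, q.IsPath ∧ 2 ≤ q.length ∧
    t = sSup (w '' {f | f ∈ q.edges})} with hC
  -- finiteness of A and B
  have hAfin : A.Finite := by
    have : A = (twt w) '' {T | IsSpanningTree G T ∧ s(u,v) ∉ T.edgeSet} := by
      ext t
      constructor
      · rintro ⟨T, h1, h2, rfl⟩; exact ⟨T, ⟨h1, h2⟩, rfl⟩
      · rintro ⟨T, ⟨h1, h2⟩, rfl⟩; exact ⟨T, h1, h2, rfl⟩
    rw [this]
    exact (Set.toFinite _).image _
  have hBfin : B.Finite := by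
    have : B = (fun T => ∑ f ∈ Finset.univ.filter (fun f => f ∈ T.edgeSet ∧ f ≠ s(u,v)), w f) ''
        {T | IsSpanningTree G T ∧ s(u,v) ∈ T.edgeSet} := by
      ext t
      constructor
      · rintro ⟨T, h1, h2, rfl⟩; exact ⟨T, ⟨h1, h2⟩, rfl⟩
      · rintro ⟨T, ⟨h1, h2⟩, rfl⟩; exact ⟨T, h1, h2, rfl⟩
    rw [this]
    exact (Set.toFinite _).image _
  -- a spanning tree avoiding the edge
  obtain ⟨T0, hT0le, hT0⟩ := exists_st (connected_del_of_reach hG hreach)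
  have hT0G : T0 ≤ G := hT0le.trans (SimpleGraph.deleteEdges_le _)
  have hT0e : s(u,v) ∉ T0.edgeSet := by
    intro hmem
    have := (SimpleGraph.edgeSet_mono hT0le) hmem
    rw [SimpleGraph.edgeSet_deleteEdges] at this
    exact this.2 rfl
  have hAne : A.Nonempty := ⟨twt w T0, T0, ⟨hT0G, hT0⟩, hT0e, rfl⟩
  -- a spanning tree containing the edge
  have hBne : B.Nonempty := by
    obtain ⟨Pw⟩ := hT0.1 u v
    obtain ⟨P, hPpath⟩ : ∃ P : T0.Walk u v, P.IsPath := ⟨Pw.toPath, Pw.toPath.2⟩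
    have hPne : P.edges ≠ [] := by
      intro h
      have := P.length_edges
      rw [h] at this
      exact huv.ne (P.eq_of_length_eq_zero this.symm)
    obtain ⟨f, hf⟩ := List.exists_mem_of_ne_nil _ hPne
    obtain ⟨T₂, hsp, hin, -⟩ := exchange_add w hT0G hT0 huv hT0e hPpath hf
    exact ⟨_, T₂, hsp, hin, rfl⟩
  -- the canonical bottleneck path
  have hCne : C.Nonempty := by
    obtain ⟨p1, hp1⟩ : ∃ p : (G.deleteEdges {s(u,v)}).Walk u v, p.IsPath :=
      ⟨hreach.some.toPath, hreach.some.toPath.2⟩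
    have hnadj : ¬ (G.deleteEdges {s(u,v)}).Adj u v := by
      rw [SimpleGraph.deleteEdges_adj]
      rintro ⟨-, h⟩
      exact h rfl
    have hsub : ∀ g ∈ p1.edges, g ∈ G.edgeSet := fun g hg =>
      (SimpleGraph.edgeSet_mono (SimpleGraph.deleteEdges_le _)) (p1.edges_subset_edgeSet hg)
    refine ⟨_, p1.transfer G hsub, hp1.transfer hsub, ?_, rfl⟩
    rw [Walk.length_transfer]
    exact two_le_length huv.ne hnadj p1
  have hAbdd := hAfin.bddBelow
  have hBbdd := hBfin.bddBelow
  have hCbdd : BddBelow C := bddBelow_ntb_set G w u v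
  have hAmem : sInf A ∈ A := hAne.csInf_mem hAfin
  have hBmem : sInf B ∈ B := hBne.csInf_mem hBfin
  apply le_antisymm
  · -- sInf A ≤ sInf B + sInf C
    obtain ⟨T, hTsp, hTe, hBval⟩ := hBmem
    have hBeq : sInf B = twt w T - w (s(u,v)) := hBval.trans (sum_ne_eq w hTe)
    have hle : ∀ c ∈ C, sInf A ≤ sInf B + c := by
      rintro c ⟨q, hqp, hql, rfl⟩
      have hqe : s(u,v) ∉ q.edges := path_no_uv huv.ne hqp hql
      obtain ⟨T₂, f, hfq, hsp₂, hnot₂, hw₂⟩ := exchange_remove w hTsp.1 hTsp.2 huv hTe hqe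
      have hstep : sInf A ≤ twt w T₂ := csInf_le hAbdd ⟨T₂, hsp₂, hnot₂, rfl⟩
      have hfle : w f ≤ sSup (w '' {g | g ∈ q.edges}) :=
        le_csSup (bddAbove_img w q.edges) ⟨f, hfq, rfl⟩
      rw [hw₂] at hstep
      rw [hBeq]
      linarith
    have : sInf A - sInf B ≤ sInf C :=
      le_csInf hCne (fun c hc => by linarith [hle c hc])
    linarith
  · -- sInf B + sInf C ≤ sInf A
    obtain ⟨T', hT'sp, hT'e, hAval⟩ := hAmem
    obtain ⟨Pw⟩ := hT'sp.2.1 u v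
    obtain ⟨P, hPpath⟩ : ∃ P : T'.Walk u v, P.IsPath := ⟨Pw.toPath, Pw.toPath.2⟩
    have hPlen : 2 ≤ P.length := two_le_length huv.ne (fun h => hT'e h) P
    have hedne : P.edges.toFinset.Nonempty := by
      obtain ⟨g, hg⟩ := exists_edge_of_two_le P hPlen
      exact ⟨g, List.mem_toFinset.2 hg⟩
    obtain ⟨f, hfmem, hfmax⟩ := Finset.exists_max_image _ w hedne
    have hf : f ∈ P.edges := List.mem_toFinset.1 hfmem
    obtain ⟨T₂, hsp₂, hin₂, hw₂⟩ := exchange_add w hT'sp.1 hT'sp.2 huv hT'e hPpath hf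
    have h1 : sInf B ≤ twt w T₂ - w (s(u,v)) :=
      csInf_le hBbdd ⟨T₂, hsp₂, hin₂, (sum_ne_eq w hin₂).symm⟩
    have hsub : ∀ g ∈ P.edges, g ∈ G.edgeSet := fun g hg =>
      (SimpleGraph.edgeSet_mono hT'sp.1) (P.edges_subset_edgeSet hg)
    have hCel : sSup (w '' {g | g ∈ (P.transfer G hsub).edges}) ∈ C := by
      refine ⟨P.transfer G hsub, hPpath.transfer hsub, ?_, rfl⟩
      rw [Walk.length_transfer]
      exact hPlen
    rw [Walk.edges_transfer] at hCel
    have h2 : sInf C ≤ sSup (w '' {g | g ∈ P.edges}) := csInf_le hCbdd hCel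
    have h3 : sSup (w '' {g | g ∈ P.edges}) ≤ w f := by
      refine csSup_le ⟨w f, ⟨f, hf, rfl⟩⟩ ?_
      rintro _ ⟨g, hg, rfl⟩
      exact hfmax g (List.mem_toFinset.2 hg)
    rw [hw₂] at h1
    rw [hAval]
    linarith

end Core

/-- For the MST problem with uncertainty intervals `[ℓ_e, h_e]` and any
non-bridge edge `uv`, the threshold of inclusion equals the non-trivial bottleneck under
the lower weights, `T⁺_{uv} = b_ℓ(u,v)`, and the threshold of exclusion equals the
non-trivial bottleneck under the upper weights, `T⁻_{uv} = b_h(u,v)`. -/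
theorem stmt16 {V : Type*} [Fintype V] [DecidableEq V]
    (G : SimpleGraph V) (hG : G.Connected) (lo hi : Sym2 V → ℝ)
    (hlh : ∀ f, lo f ≤ hi f)
    (u v : V) (huv : G.Adj u v) (hb : ¬ G.IsBridge s(u, v)) :
    TplusTree G lo hi s(u, v) = ntb G lo u v ∧
    TminusTree G lo hi s(u, v) = ntb G hi u v := by
  classical
  have hcore : ∀ w : Sym2 V → ℝ,
      OPTmTree G w s(u,v) - OPTpTree G w s(u,v) = ntb G w u v := by
    intro w
    have := core G hG w u v huv hb
    linarith
  -- a canonical non-trivial path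
  have hreach : (G.deleteEdges {s(u,v)}).Reachable u v := by
    rw [SimpleGraph.isBridge_iff] at hb
    push_neg at hb
    exact hb
  obtain ⟨p1, hp1⟩ : ∃ p : (G.deleteEdges {s(u,v)}).Walk u v, p.IsPath :=
    ⟨hreach.some.toPath, hreach.some.toPath.2⟩
  have hsub : ∀ g ∈ p1.edges, g ∈ G.edgeSet := fun g hg =>
    (SimpleGraph.edgeSet_mono (SimpleGraph.deleteEdges_le _)) (p1.edges_subset_edgeSet hg)
  have hnadj : ¬ (G.deleteEdges {s(u,v)}).Adj u v := by
    rw [SimpleGraph.deleteEdges_adj]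
    rintro ⟨-, h⟩
    exact h rfl
  have hq0p : (p1.transfer G hsub).IsPath := hp1.transfer hsub
  have hq0l : 2 ≤ (p1.transfer G hsub).length := by
    rw [Walk.length_transfer]
    exact two_le_length huv.ne hnadj p1
  have hmono : ∀ w₁ w₂ : Sym2 V → ℝ, (∀ f, w₁ f ≤ w₂ f) →
      ntb G w₁ u v ≤ ntb G w₂ u v := fun w₁ w₂ h => ntb_mono G u v hq0p hq0l h
  have hseteq : {t : ℝ | ∃ w : Sym2 V → ℝ, (∀ f, w f ∈ Set.Icc (lo f) (hi f)) ∧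
      t = OPTmTree G w s(u,v) - OPTpTree G w s(u,v)} =
      {t : ℝ | ∃ w : Sym2 V → ℝ, (∀ f, w f ∈ Set.Icc (lo f) (hi f)) ∧ t = ntb G w u v} := by
    ext t
    constructor
    · rintro ⟨w, hw, rfl⟩
      exact ⟨w, hw, hcore w⟩
    · rintro ⟨w, hw, rfl⟩
      exact ⟨w, hw, (hcore w).symm⟩
  have hlomem : ntb G lo u v ∈ {t : ℝ | ∃ w : Sym2 V → ℝ,
      (∀ f, w f ∈ Set.Icc (lo f) (hi f)) ∧ t = ntb G w u v} :=
    ⟨lo, fun f => ⟨le_rfl, hlh f⟩, rfl⟩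
  have hhimem : ntb G hi u v ∈ {t : ℝ | ∃ w : Sym2 V → ℝ,
      (∀ f, w f ∈ Set.Icc (lo f) (hi f)) ∧ t = ntb G w u v} :=
    ⟨hi, fun f => ⟨hlh f, le_rfl⟩, rfl⟩
  have hlb : ∀ t ∈ {t : ℝ | ∃ w : Sym2 V → ℝ,
      (∀ f, w f ∈ Set.Icc (lo f) (hi f)) ∧ t = ntb G w u v}, ntb G lo u v ≤ t := by
    rintro t ⟨w, hw, rfl⟩
    exact hmono lo w (fun f => (hw f).1)
  have hub : ∀ t ∈ {t : ℝ | ∃ w : Sym2 V → ℝ,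
      (∀ f, w f ∈ Set.Icc (lo f) (hi f)) ∧ t = ntb G w u v}, t ≤ ntb G hi u v := by
    rintro t ⟨w, hw, rfl⟩
    exact hmono w hi (fun f => (hw f).2)
  constructor
  · unfold TplusTree
    rw [hseteq]
    exact le_antisymm (csInf_le ⟨ntb G lo u v, hlb⟩ hlomem) (le_csInf ⟨_, hlomem⟩ hlb)
  · unfold TminusTree
    rw [hseteq]
    exact le_antisymm (csSup_le ⟨_, hhimem⟩ hub) (le_csSup ⟨ntb G hi u v, hub⟩ hhimem)
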